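/- arXiv:1502.02926 — 5 statements merged into one kernel-verified Lean document; each statement's English description precedes it below -/
import Mathlib

section
/- Let α > 0 and β < 0, and set γ = √(β² + 2α). Define D(t) = γ(e^{γt} + 1) − β(e^{γt} − 1) and Ψ(t) = −2(e^{γt} − 1)/D(t) for t ≥ 0. Then D(t) > 0 for all t ≥ 0 (so Ψ is well defined), Ψ(0) = 0, and for every t ≥ 0 one has Ψ'(t) = (α/2)·Ψ(t)² + βΨ(t) − 1. In other words, Ψ is the solution of the Riccati equation of the Cox–Ingersoll–Ross model with functional characteristic R(u) = (α/2)u² + βu and λ = 1 (and Φ ≡ 0 solves Φ' = F∘Ψ since F ≡ 0). -/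
open Real

/-! With `E = exp (γ t)` the denominator is `(γ - β) E + (γ + β)`, which is positive as soon as
`|β| < γ`, i.e. as soon as `α > 0`. The Riccati equation is then a rational identity in `E`,
which holds exactly because `γ² = β² + 2α`. -/

noncomputable def riccatiDenom (β γ t : ℝ) : ℝ :=
  γ * (exp (γ * t) + 1) - β * (exp (γ * t) - 1)

noncomputable def riccatiSol (β γ t : ℝ) : ℝ :=
  -2 * (exp (γ * t) - 1) / riccatiDenom β γ t

lemma abs_lt_sqrt_sq_add {b c : ℝ} (hc : 0 < c) : |b| < √(b ^ 2 + c) :=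
  (lt_sqrt (abs_nonneg b)).2 (by rw [sq_abs]; linarith)

lemma riccatiDenom_eq (β γ t : ℝ) :
    riccatiDenom β γ t = (γ - β) * exp (γ * t) + (γ + β) := by
  unfold riccatiDenom; ring

lemma riccatiDenom_pos {β γ : ℝ} (h : |β| < γ) (t : ℝ) : 0 < riccatiDenom β γ t := by
  have hγβ : 0 < γ - β := by linarith [le_abs_self β]
  have hγβ' : 0 < γ + β := by linarith [neg_abs_le β]
  rw [riccatiDenom_eq]
  positivity

lemma riccatiSol_zero (β γ : ℝ) : riccatiSol β γ 0 = 0 := by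
  simp [riccatiSol]

lemma hasDerivAt_exp_mul (γ t : ℝ) : HasDerivAt (fun s ↦ exp (γ * s)) (γ * exp (γ * t)) t := by
  simpa [mul_comm] using ((hasDerivAt_id t).const_mul γ).exp

lemma hasDerivAt_riccatiDenom (β γ t : ℝ) :
    HasDerivAt (riccatiDenom β γ) ((γ - β) * (γ * exp (γ * t))) t := by
  have h := ((hasDerivAt_exp_mul γ t).const_mul (γ - β)).add_const (γ + β)
  exact h.congr_of_eventuallyEq (.of_forall fun s ↦ riccatiDenom_eq β γ s)

lemma hasDerivAt_riccatiSol {α β γ : ℝ} (hγ : γ ^ 2 = β ^ 2 + 2 * α) {t : ℝ}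
    (hD : riccatiDenom β γ t ≠ 0) :
    HasDerivAt (riccatiSol β γ) (α / 2 * riccatiSol β γ t ^ 2 + β * riccatiSol β γ t - 1) t := by
  have h := (((hasDerivAt_exp_mul γ t).sub_const 1).const_mul (-2)).div
    (hasDerivAt_riccatiDenom β γ t) hD
  refine h.congr_deriv ?_
  have hα : α = (γ ^ 2 - β ^ 2) / 2 := by linarith
  have hDE := riccatiDenom_eq β γ t
  simp only [riccatiSol]
  -- keep the denominator atomic so that `field_simp` can use `hD`
  generalize riccatiDenom β γ t = D at hD hDE ⊢
  generalize exp (γ * t) = E at hDE ⊢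
  subst hα
  field_simp
  subst hDE
  ring

theorem stmt_1_general (α β : ℝ) (hα : 0 < α)
    (γ : ℝ) (hγ : γ = Real.sqrt (β ^ 2 + 2 * α))
    (D Ψ : ℝ → ℝ)
    (hD : ∀ t, D t = γ * (Real.exp (γ * t) + 1) - β * (Real.exp (γ * t) - 1))
    (hΨ : ∀ t, Ψ t = -2 * (Real.exp (γ * t) - 1) / D t) :
    (∀ t, 0 ≤ t → 0 < D t) ∧ Ψ 0 = 0 ∧
      ∀ t, 0 ≤ t → HasDerivAt Ψ ((α / 2) * (Ψ t) ^ 2 + β * Ψ t - 1) t := by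
  obtain rfl : D = riccatiDenom β γ := funext hD
  obtain rfl : Ψ = riccatiSol β γ := funext hΨ
  have hβγ : |β| < γ := hγ ▸ abs_lt_sqrt_sq_add (by positivity)
  have hγsq : γ ^ 2 = β ^ 2 + 2 * α := by rw [hγ, sq_sqrt (by positivity)]
  exact ⟨fun t _ ↦ riccatiDenom_pos hβγ t, riccatiSol_zero β γ,
    fun t _ ↦ hasDerivAt_riccatiSol hγsq (riccatiDenom_pos hβγ t).ne'⟩

/-- The Riccati solution of the Cox–Ingersoll–Ross model.
Let α > 0, β < 0, γ = √(β² + 2α), D(t) = γ(e^{γt} + 1) − β(e^{γt} − 1),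
Ψ(t) = −2(e^{γt} − 1)/D(t). Then D(t) > 0 for all t ≥ 0, Ψ(0) = 0, and
Ψ'(t) = (α/2)Ψ(t)² + βΨ(t) − 1 for all t ≥ 0. -/
theorem stmt_1 (α β : ℝ) (hα : 0 < α) (hβ : β < 0)
    (γ : ℝ) (hγ : γ = Real.sqrt (β ^ 2 + 2 * α))
    (D Ψ : ℝ → ℝ)
    (hD : ∀ t, D t = γ * (Real.exp (γ * t) + 1) - β * (Real.exp (γ * t) - 1))
    (hΨ : ∀ t, Ψ t = -2 * (Real.exp (γ * t) - 1) / D t) :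
    (∀ t, 0 ≤ t → 0 < D t) ∧ Ψ 0 = 0 ∧
      ∀ t, 0 ≤ t → HasDerivAt Ψ ((α / 2) * (Ψ t) ^ 2 + β * Ψ t - 1) t :=
  stmt_1_general α β hα γ hγ D Ψ hD hΨ
end

section
/- Let Φ : ℝ₊ → ℝ and Ψ : ℝ₊ → ℝ^d be twice continuously differentiable and satisfy the Riccati equations Φ' = F∘Ψ and Ψ' = R∘Ψ − λ. Then for every x ∈ ℝ^d and every τ ≥ 0, Φ''(τ) + ⟨Ψ''(τ), x⟩ − ⟨Ψ'(τ), B(x)⟩ = ⟨Ψ(τ), A(x)·Ψ'(τ)⟩. (This identity shows that the drift appearing in the Heath–Jarrow–Morton equation of a Hull–White extended affine model equals μ^{HJM}(x) = ⟨Ψ, A(x)Ψ'⟩.) -/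
/-!
Differentiating the Riccati equations once more along Ψ, the symmetry of `a` and `αⁱ` gives
`Φ'' = ⟨Ψ, a Ψ'⟩ + ⟨Ψ', b⟩` and `Ψ''ⁱ = ⟨Ψ, αⁱ Ψ'⟩ + ⟨Ψ', βⁱ⟩`. Pairing the second identity with `x`
and adding the first, the terms in `b` and `βⁱ` make up `⟨Ψ', B x⟩`, and what is left is
`⟨Ψ, A x Ψ'⟩`.
-/

open Matrix Set

section Derivatives

variable {𝕜 ι : Type*} [NontriviallyNormedField 𝕜] [Fintype ι]
  {f g : 𝕜 → ι → 𝕜} {f' g' : ι → 𝕜} {s : Set 𝕜} {x : 𝕜}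

theorem HasDerivWithinAt.dotProduct (hf : HasDerivWithinAt f f' s x)
    (hg : HasDerivWithinAt g g' s x) :
    HasDerivWithinAt (fun t => f t ⬝ᵥ g t) (f' ⬝ᵥ g x + f x ⬝ᵥ g') s x := by
  have hfg := HasDerivWithinAt.fun_sum (u := Finset.univ) fun i _ =>
    (hasDerivWithinAt_pi.1 hf i).fun_mul (hasDerivWithinAt_pi.1 hg i)
  rw [Finset.sum_add_distrib] at hfg
  exact hfg

theorem HasDerivWithinAt.mulVec {κ : Type*} (M : Matrix κ ι 𝕜) (hf : HasDerivWithinAt f f' s x) :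
    HasDerivWithinAt (fun t => M *ᵥ f t) (M *ᵥ f') s x :=
  hasDerivWithinAt_pi.2 fun k =>
    ((hasDerivWithinAt_const x s (M k)).dotProduct hf).congr_deriv
      (by rw [zero_dotProduct, zero_add]; rfl)

end Derivatives

theorem Matrix.IsSymm.dotProduct_mulVec_comm {n α : Type*} [Fintype n] [CommSemiring α]
    {M : Matrix n n α} (hM : M.IsSymm) (u v : n → α) : u ⬝ᵥ M *ᵥ v = v ⬝ᵥ M *ᵥ u := by
  rw [dotProduct_mulVec, ← mulVec_transpose, hM.eq, dotProduct_comm]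

section Quadratic

variable {ι : Type*} [Fintype ι] {M : Matrix ι ι ℝ} {f : ℝ → ι → ℝ} {f' : ι → ℝ}
  {s : Set ℝ} {x : ℝ}

theorem HasDerivWithinAt.half_dotProduct_mulVec_add_dotProduct (hM : M.IsSymm) (c : ι → ℝ)
    (hf : HasDerivWithinAt f f' s x) :
    HasDerivWithinAt (fun t => 1 / 2 * (f t ⬝ᵥ M *ᵥ f t) + f t ⬝ᵥ c)
      (f x ⬝ᵥ M *ᵥ f' + f' ⬝ᵥ c) s x := by
  refine (((hf.dotProduct (hf.mulVec M)).const_mul (1 / 2)).add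
    (hf.dotProduct (hasDerivWithinAt_const x s c))).congr_deriv ?_
  rw [hM.dotProduct_mulVec_comm f', dotProduct_zero]
  ring

theorem eq_of_hasDerivWithinAt_quadratic_comp (hM : M.IsSymm) (c : ι → ℝ) (k : ℝ)
    {g : ℝ → ℝ} {g' : ℝ} (hs : UniqueDiffWithinAt ℝ s x) (hx : x ∈ s)
    (hf : HasDerivWithinAt f f' s x) (hg : HasDerivWithinAt g g' s x)
    (hgf : ∀ t ∈ s, g t = 1 / 2 * (f t ⬝ᵥ M *ᵥ f t) + f t ⬝ᵥ c + k) :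
    g' = f x ⬝ᵥ M *ᵥ f' + f' ⬝ᵥ c :=
  hs.eq_deriv s (hg.congr_of_mem (fun t ht => (hgf t ht).symm) hx)
    ((hf.half_dotProduct_mulVec_add_dotProduct hM c).add_const k)

end Quadratic

theorem dotProduct_eq_sum_smul_mulVec_add {ι : Type*} [Fintype ι] (α : ι → Matrix ι ι ℝ)
    (β : ι → ι → ℝ) (u v x : ι → ℝ) :
    (fun i => u ⬝ᵥ α i *ᵥ v + v ⬝ᵥ β i) ⬝ᵥ x
      = u ⬝ᵥ (∑ i, x i • α i) *ᵥ v + v ⬝ᵥ ∑ i, x i • β i := by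
  simp only [Matrix.sum_mulVec, smul_mulVec, dotProduct_sum, dotProduct_smul,
    smul_eq_mul, ← Finset.sum_add_distrib]
  exact Finset.sum_congr rfl fun i _ => by ring

theorem stmt_2_general (d : ℕ)
    (a : Matrix (Fin d) (Fin d) ℝ) (α : Fin d → Matrix (Fin d) (Fin d) ℝ)
    (b l : Fin d → ℝ) (β : Fin d → Fin d → ℝ)
    (ha : a.IsSymm) (hα : ∀ i, (α i).IsSymm)
    (F : (Fin d → ℝ) → ℝ) (R : (Fin d → ℝ) → Fin d → ℝ)
    (hF : ∀ u, F u = (1 / 2) * (u ⬝ᵥ a.mulVec u) + u ⬝ᵥ b)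
    (hR : ∀ u i, R u i = (1 / 2) * (u ⬝ᵥ (α i).mulVec u) + u ⬝ᵥ β i)
    (A : (Fin d → ℝ) → Matrix (Fin d) (Fin d) ℝ) (B : (Fin d → ℝ) → Fin d → ℝ)
    (hA : ∀ x, A x = a + ∑ i, x i • α i)
    (hB : ∀ x, B x = b + ∑ i, x i • β i)
    (Φ' Φ'' : ℝ → ℝ) (Ψ Ψ' Ψ'' : ℝ → Fin d → ℝ)
    (hΦ'' : ∀ τ ∈ Ici (0 : ℝ), HasDerivWithinAt Φ' (Φ'' τ) (Ici 0) τ)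
    (hΨ' : ∀ τ ∈ Ici (0 : ℝ), HasDerivWithinAt Ψ (Ψ' τ) (Ici 0) τ)
    (hΨ'' : ∀ τ ∈ Ici (0 : ℝ), HasDerivWithinAt Ψ' (Ψ'' τ) (Ici 0) τ)
    (hRic1 : ∀ τ ∈ Ici (0 : ℝ), Φ' τ = F (Ψ τ))
    (hRic2 : ∀ τ ∈ Ici (0 : ℝ), Ψ' τ = R (Ψ τ) - l) :
    ∀ (x : Fin d → ℝ), ∀ τ ∈ Ici (0 : ℝ),
      Φ'' τ + Ψ'' τ ⬝ᵥ x - Ψ' τ ⬝ᵥ B x = Ψ τ ⬝ᵥ (A x).mulVec (Ψ' τ) := by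
  intro x τ hτ
  have hu : UniqueDiffWithinAt ℝ (Ici 0) τ := uniqueDiffOn_Ici 0 τ hτ
  have hΦ''τ : Φ'' τ = Ψ τ ⬝ᵥ a *ᵥ Ψ' τ + Ψ' τ ⬝ᵥ b :=
    eq_of_hasDerivWithinAt_quadratic_comp ha b 0 hu hτ (hΨ' τ hτ) (hΦ'' τ hτ)
      fun t ht => by rw [hRic1 t ht, hF, add_zero]
  have hΨ''τ : Ψ'' τ = fun i => Ψ τ ⬝ᵥ α i *ᵥ Ψ' τ + Ψ' τ ⬝ᵥ β i := funext fun i =>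
    eq_of_hasDerivWithinAt_quadratic_comp (hα i) (β i) (-l i) hu hτ (hΨ' τ hτ)
      (hasDerivWithinAt_pi.1 (hΨ'' τ hτ) i)
      fun t ht => by rw [hRic2 t ht, Pi.sub_apply, hR, sub_eq_add_neg]
  rw [hΦ''τ, hΨ''τ, dotProduct_eq_sum_smul_mulVec_add, hA, hB, add_mulVec, dotProduct_add,
    dotProduct_add]
  ring

/-- The HJM drift identity for Hull–White extended affine models.
If (Φ, Ψ) solve the Riccati equations Φ' = F∘Ψ, Ψ' = R∘Ψ − λ, then for every x and τ ≥ 0,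
Φ''(τ) + ⟨Ψ''(τ), x⟩ − ⟨Ψ'(τ), B(x)⟩ = ⟨Ψ(τ), A(x)·Ψ'(τ)⟩. -/
theorem stmt_2 (d : ℕ) (hd : 1 ≤ d)
    (a : Matrix (Fin d) (Fin d) ℝ) (α : Fin d → Matrix (Fin d) (Fin d) ℝ)
    (b l : Fin d → ℝ) (β : Fin d → Fin d → ℝ)
    (ha : a.IsSymm) (hα : ∀ i, (α i).IsSymm)
    (F : (Fin d → ℝ) → ℝ) (R : (Fin d → ℝ) → Fin d → ℝ)
    (hF : ∀ u, F u = (1 / 2) * (u ⬝ᵥ a.mulVec u) + u ⬝ᵥ b)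
    (hR : ∀ u i, R u i = (1 / 2) * (u ⬝ᵥ (α i).mulVec u) + u ⬝ᵥ β i)
    (A : (Fin d → ℝ) → Matrix (Fin d) (Fin d) ℝ) (B : (Fin d → ℝ) → Fin d → ℝ)
    (hA : ∀ x, A x = a + ∑ i, x i • α i)
    (hB : ∀ x, B x = b + ∑ i, x i • β i)
    (Φ Φ' Φ'' : ℝ → ℝ) (Ψ Ψ' Ψ'' : ℝ → Fin d → ℝ)
    (hΦ' : ∀ τ ∈ Ici (0 : ℝ), HasDerivWithinAt Φ (Φ' τ) (Ici 0) τ)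
    (hΦ'' : ∀ τ ∈ Ici (0 : ℝ), HasDerivWithinAt Φ' (Φ'' τ) (Ici 0) τ)
    (hΦ''c : ContinuousOn Φ'' (Ici 0))
    (hΨ' : ∀ τ ∈ Ici (0 : ℝ), HasDerivWithinAt Ψ (Ψ' τ) (Ici 0) τ)
    (hΨ'' : ∀ τ ∈ Ici (0 : ℝ), HasDerivWithinAt Ψ' (Ψ'' τ) (Ici 0) τ)
    (hΨ''c : ContinuousOn Ψ'' (Ici 0))
    (hRic1 : ∀ τ ∈ Ici (0 : ℝ), Φ' τ = F (Ψ τ))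
    (hRic2 : ∀ τ ∈ Ici (0 : ℝ), Ψ' τ = R (Ψ τ) - l) :
    ∀ (x : Fin d → ℝ), ∀ τ ∈ Ici (0 : ℝ),
      Φ'' τ + Ψ'' τ ⬝ᵥ x - Ψ' τ ⬝ᵥ B x = Ψ τ ⬝ᵥ (A x).mulVec (Ψ' τ) :=
  stmt_2_general d a α b l β ha hα F R hF hR A B hA hB Φ' Φ'' Ψ Ψ' Ψ'' hΦ'' hΨ' hΨ'' hRic1 hRic2
end

section
/- Let a ≥ 0, β < 0, and let h : ℝ₊ → ℝ be continuously differentiable. Define θ(τ) = h'(τ) − β·h(τ) − (a/(2β))·(1 − e^{2βτ}). Then θ is continuous and for every τ ≥ 0, ∫₀^τ θ(s)·e^{β(τ−s)} ds − (a/(2β²))·(1 − e^{βτ})² + e^{βτ}·h(0) = h(τ). Moreover, θ is the unique continuous function with this property; i.e., θ is the calibrated Hull–White extension C(h) of the Vasiček model with parameters (a, β) to the initial forward rate curve h. -/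
/-!
Write `H(θ, x)(τ) = e^{βτ} (∫₀^τ θ(s) e^{-βs} ds + x) − c (1 − e^{βτ})²` with `c = a/(2β²)`.
The calibrated extension makes `θ(s) e^{-βs}` the derivative of
`G(s) = h(s) e^{-βs} + c (e^{-βs} + e^{βs})`, so the fundamental theorem of calculus gives
`H(θ, h(0)) = h`. Conversely `H(θ', x) = H(θ, x)` forces the primitives of `θ' e^{-β·}` and
`θ e^{-β·}` to agree on `[0, ∞)`; differentiating them from the right gives `θ' = θ`.
-/

open Set Real

theorem eqOn_Ici_of_intervalIntegral_eq {E : Type*} [NormedAddCommGroup E] [NormedSpace ℝ E]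
    [CompleteSpace E] {f g : ℝ → E} {a : ℝ} (hf : ContinuousOn f (Ici a))
    (hg : ContinuousOn g (Ici a))
    (hfg : ∀ t ∈ Ici a, ∫ s in a..t, f s = ∫ s in a..t, g s) : EqOn f g (Ici a) := by
  intro τ (hτ : a ≤ τ)
  have hsub : Ioi τ ⊆ Ici a := fun x (hx : τ < x) => show a ≤ x from hτ.trans hx.le
  have hderiv : ∀ φ : ℝ → E, ContinuousOn φ (Ici a) →
      HasDerivWithinAt (fun t => ∫ s in a..t, φ s) (φ τ) (Ici τ) τ := fun φ hφ =>
    intervalIntegral.integral_hasDerivWithinAt_right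
      (hφ.mono (uIcc_of_le hτ ▸ Icc_subset_Ici_self)).intervalIntegrable
      ((hφ.mono hsub).stronglyMeasurableAtFilter_nhdsWithin measurableSet_Ioi τ)
      ((hφ τ hτ).mono hsub)
  have hagree : EqOn (fun t => ∫ s in a..t, g s) (fun t => ∫ s in a..t, f s) (Ici τ) :=
    fun t (ht : τ ≤ t) => (hfg t (hτ.trans ht)).symm
  exact (uniqueDiffOn_Ici τ τ self_mem_Ici).eq_deriv _
    ((hderiv f hf).congr hagree (hagree self_mem_Ici)) (hderiv g hg)

/-- The Hull–White curve `H(θ, x)` of the extended Vasiček model with parameters `a`, `β`. -/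
noncomputable def hullWhiteCurve (a β : ℝ) (θ : ℝ → ℝ) (x τ : ℝ) : ℝ :=
  (∫ s in (0 : ℝ)..τ, θ s * exp (β * (τ - s))) - (a / (2 * β ^ 2)) * (1 - exp (β * τ)) ^ 2
    + exp (β * τ) * x

/-- The closed form of the calibration operator `C(h)`, given the derivative `h'` of `h`. -/
noncomputable def calibratedExtension (a β : ℝ) (h h' : ℝ → ℝ) (τ : ℝ) : ℝ :=
  h' τ - β * h τ - (a / (2 * β)) * (1 - exp (2 * β * τ))

theorem hullWhiteCurve_eq (a β : ℝ) (θ : ℝ → ℝ) (x τ : ℝ) :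
    hullWhiteCurve a β θ x τ = exp (β * τ) * ((∫ s in (0 : ℝ)..τ, θ s * exp (-(β * s))) + x)
      - (a / (2 * β ^ 2)) * (1 - exp (β * τ)) ^ 2 := by
  have hkernel : ∀ s, θ s * exp (β * (τ - s)) = exp (β * τ) * (θ s * exp (-(β * s))) := by
    intro s
    rw [show β * (τ - s) = β * τ + -(β * s) by ring, exp_add]
    ring
  simp only [hullWhiteCurve, hkernel, intervalIntegral.integral_const_mul]
  ring

theorem hullWhiteCurve_injOn {a β x : ℝ} {θ₁ θ₂ : ℝ → ℝ} (h₁ : ContinuousOn θ₁ (Ici 0))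
    (h₂ : ContinuousOn θ₂ (Ici 0))
    (hH : ∀ τ ∈ Ici (0 : ℝ), hullWhiteCurve a β θ₁ x τ = hullWhiteCurve a β θ₂ x τ) :
    EqOn θ₁ θ₂ (Ici 0) := by
  have hdiscount : Continuous fun s : ℝ => exp (-(β * s)) := by fun_prop
  have hintegrand := eqOn_Ici_of_intervalIntegral_eq (h₁.mul hdiscount.continuousOn)
    (h₂.mul hdiscount.continuousOn) fun t ht => by
      have := hH t ht
      rw [hullWhiteCurve_eq, hullWhiteCurve_eq] at this
      simpa [(exp_pos _).ne'] using this
  exact fun τ hτ => mul_right_cancel₀ (exp_pos _).ne' (hintegrand hτ)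

theorem continuousOn_calibratedExtension {a β : ℝ} {h h' : ℝ → ℝ} {s : Set ℝ}
    (hh : ContinuousOn h s) (hh' : ContinuousOn h' s) :
    ContinuousOn (calibratedExtension a β h h') s := by
  unfold calibratedExtension
  fun_prop

theorem hasDerivWithinAt_calibrationPotential {a β : ℝ} {h h' : ℝ → ℝ} {s : Set ℝ} {τ : ℝ}
    (hh : HasDerivWithinAt h (h' τ) s τ) :
    HasDerivWithinAt
      (fun u => h u * exp (-(β * u)) + a / (2 * β ^ 2) * (exp (-(β * u)) + exp (β * u)))
      (calibratedExtension a β h h' τ * exp (-(β * τ))) s τ := by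
  have hexp : ∀ k : ℝ, HasDerivWithinAt (fun u => exp (k * u)) (k * exp (k * τ)) s τ :=
    fun k =>
      (((hasDerivAt_id τ).const_mul k).exp.congr_deriv (by simp only [id]; ring)).hasDerivWithinAt
  have hexp_neg := hexp (-β)
  simp only [neg_mul] at hexp_neg
  refine ((hh.mul hexp_neg).add ((hexp_neg.add (hexp β)).const_mul _)).congr_deriv ?_
  have hcβ : a / (2 * β ^ 2) * β = a / (2 * β) := by
    rcases eq_or_ne β 0 with rfl | hβ
    · simp
    · field_simp
  have hexp_two : exp (2 * β * τ) * exp (-(β * τ)) = exp (β * τ) := by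
    rw [← exp_add]
    ring_nf
  simp only [calibratedExtension]
  linear_combination (exp (β * τ) - exp (-(β * τ))) * hcβ - a / (2 * β) * hexp_two

theorem hullWhiteCurve_calibratedExtension {a β : ℝ} {h h' : ℝ → ℝ}
    (hh : ∀ τ ∈ Ici (0 : ℝ), HasDerivWithinAt h (h' τ) (Ici 0) τ) (hh' : ContinuousOn h' (Ici 0))
    {τ : ℝ} (hτ : 0 ≤ τ) :
    hullWhiteCurve a β (calibratedExtension a β h h') (h 0) τ = h τ := by
  have hpotential := fun u (hu : u ∈ Ici (0 : ℝ)) =>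
    hasDerivWithinAt_calibrationPotential (a := a) (β := β) (hh u hu)
  have hintegrand :
      ContinuousOn (fun s => calibratedExtension a β h h' s * exp (-(β * s))) (Ici 0) :=
    (continuousOn_calibratedExtension (fun u hu => (hh u hu).continuousWithinAt) hh').mul
      (by fun_prop)
  have hFTC := intervalIntegral.integral_eq_sub_of_hasDeriv_right_of_le hτ
    (fun u hu => ((hpotential u hu.1).continuousWithinAt).mono Icc_subset_Ici_self)
    (fun u hu => ((hpotential u hu.1.le).hasDerivAt (Ici_mem_nhds hu.1)).hasDerivWithinAt)
    (hintegrand.mono (uIcc_of_le hτ ▸ Icc_subset_Ici_self)).intervalIntegrable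
  have hexp : exp (β * τ) * exp (-(β * τ)) = 1 := by rw [← exp_add, add_neg_cancel, exp_zero]
  rw [hullWhiteCurve_eq, hFTC]
  simp only [mul_zero, neg_zero, exp_zero]
  linear_combination (h τ + a / (2 * β ^ 2)) * hexp

theorem stmt_7_general (a β : ℝ)
    (h h' : ℝ → ℝ)
    (hdh : ∀ τ ∈ Ici (0 : ℝ), HasDerivWithinAt h (h' τ) (Ici 0) τ)
    (hh'c : ContinuousOn h' (Ici 0))
    (θ : ℝ → ℝ)
    (hθ : ∀ τ, θ τ = h' τ - β * h τ - (a / (2 * β)) * (1 - Real.exp (2 * β * τ))) :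
    ContinuousOn θ (Ici 0) ∧
    (∀ τ ∈ Ici (0 : ℝ),
      (∫ s in (0 : ℝ)..τ, θ s * Real.exp (β * (τ - s)))
        - (a / (2 * β ^ 2)) * (1 - Real.exp (β * τ)) ^ 2
        + Real.exp (β * τ) * h 0 = h τ) ∧
    ∀ θ' : ℝ → ℝ, ContinuousOn θ' (Ici 0) →
      (∀ τ ∈ Ici (0 : ℝ),
        (∫ s in (0 : ℝ)..τ, θ' s * Real.exp (β * (τ - s)))
          - (a / (2 * β ^ 2)) * (1 - Real.exp (β * τ)) ^ 2
          + Real.exp (β * τ) * h 0 = h τ) →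
      EqOn θ' θ (Ici 0) := by
  obtain rfl : θ = calibratedExtension a β h h' := funext hθ
  have hθc : ContinuousOn (calibratedExtension a β h h') (Ici 0) :=
    continuousOn_calibratedExtension (fun τ hτ => (hdh τ hτ).continuousWithinAt) hh'c
  have hcalibrated := fun τ (hτ : τ ∈ Ici (0 : ℝ)) =>
    hullWhiteCurve_calibratedExtension (a := a) (β := β) hdh hh'c hτ
  exact ⟨hθc, hcalibrated, fun θ' hθ' hH' =>
    hullWhiteCurve_injOn hθ' hθc fun τ hτ => (hH' τ hτ).trans (hcalibrated τ hτ).symm⟩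

/-- Closed-form calibration operator of the Vasiček model.
For a ≥ 0, β < 0 and a C¹ forward curve h, the function
θ(τ) = h'(τ) − βh(τ) − (a/(2β))(1 − e^{2βτ}) is continuous and is the unique continuous
solution of H(θ, h(0)) = h, where
H(θ, x)(τ) = ∫₀^τ θ(s)e^{β(τ−s)} ds − (a/(2β²))(1 − e^{βτ})² + e^{βτ}x. -/
theorem stmt_7 (a β : ℝ) (ha : 0 ≤ a) (hβ : β < 0)
    (h h' : ℝ → ℝ)
    (hdh : ∀ τ ∈ Ici (0 : ℝ), HasDerivWithinAt h (h' τ) (Ici 0) τ)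
    (hh'c : ContinuousOn h' (Ici 0))
    (θ : ℝ → ℝ)
    (hθ : ∀ τ, θ τ = h' τ - β * h τ - (a / (2 * β)) * (1 - Real.exp (2 * β * τ))) :
    ContinuousOn θ (Ici 0) ∧
    (∀ τ ∈ Ici (0 : ℝ),
      (∫ s in (0 : ℝ)..τ, θ s * Real.exp (β * (τ - s)))
        - (a / (2 * β ^ 2)) * (1 - Real.exp (β * τ)) ^ 2
        + Real.exp (β * τ) * h 0 = h τ) ∧
    ∀ θ' : ℝ → ℝ, ContinuousOn θ' (Ici 0) →
      (∀ τ ∈ Ici (0 : ℝ),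
        (∫ s in (0 : ℝ)..τ, θ' s * Real.exp (β * (τ - s)))
          - (a / (2 * β ^ 2)) * (1 - Real.exp (β * τ)) ^ 2
          + Real.exp (β * τ) * h 0 = h τ) →
      EqOn θ' θ (Ici 0) :=
  stmt_7_general a β h h' hdh hh'c θ hθ
end

section
/- Let d ≥ 1, ℓ ∈ ℝ, x, x' ∈ ℝ^d, δ ≥ 0, let Φ : ℝ₊ → ℝ and Ψ : ℝ₊ → ℝ^d be continuously differentiable, and let θ : ℝ₊ → ℝ be continuous. Define H(θ, x)(τ) = ℓ − ∫₀^τ θ(s)⟨Ψ'(τ−s), e₁⟩ ds − Φ'(τ) − ⟨Ψ'(τ), x⟩. Then for every τ ≥ 0: H(θ(δ+·), x')(τ) = H(θ, x)(δ+τ) + Φ'(δ+τ) − Φ'(τ) + ⟨Ψ'(δ+τ), x⟩ − ⟨Ψ'(τ), x'⟩ + ∫₀^δ θ(s)⟨Ψ'(δ+τ−s), e₁⟩ ds. (This is the efficient update formula for forward rate curves in consistent recalibration models: it expresses the new curve via integrals over an interval of length δ only.) -/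
/-! The substitution `s ↦ δ + s` turns the convolution integral of the shifted `θ` over `[0, τ]`
into the integral of `θ(s) ⟨Ψ'(δ + τ - s), e₁⟩` over `[δ, δ + τ]`, which is the difference of its
integrals over `[0, δ + τ]` and `[0, δ]`; the rest is linear bookkeeping. -/

open Matrix Set MeasureTheory

theorem intervalIntegral.integral_comp_add_left_eq_sub {E : Type*} [NormedAddCommGroup E]
    [NormedSpace ℝ E] {g : ℝ → E} {a δ τ : ℝ} (hδτ : IntervalIntegrable g volume a (δ + τ))
    (hδ : IntervalIntegrable g volume a δ) :
    ∫ s in (0 : ℝ)..τ, g (δ + s) = (∫ s in a..(δ + τ), g s) - ∫ s in a..δ, g s := by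
  rw [intervalIntegral.integral_interval_sub_left hδτ hδ,
    intervalIntegral.integral_comp_add_left g δ, add_zero]

theorem continuousOn_mul_dotProduct_comp_sub {ι : Type*} [Fintype ι] {θ : ℝ → ℝ}
    {Ψ : ℝ → ι → ℝ} (hθ : ContinuousOn θ (Ici 0)) (hΨ : ContinuousOn Ψ (Ici 0))
    (v : ι → ℝ) (t : ℝ) :
    ContinuousOn (fun s => θ s * (Ψ (t - s) ⬝ᵥ v)) (Icc 0 t) := by
  have hΨt : ContinuousOn (fun s => Ψ (t - s)) (Icc 0 t) :=
    hΨ.comp (by fun_prop) fun s hs => sub_nonneg.mpr hs.2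
  exact (hθ.mono Icc_subset_Ici_self).mul
    ((continuous_id.dotProduct continuous_const).comp_continuousOn hΨt)

theorem stmt_8_general (d : ℕ) (ℓ : ℝ)
    (e₁ : Fin d → ℝ)
    (x x' : Fin d → ℝ) (δ : ℝ) (hδ : 0 ≤ δ)
    (Φ' : ℝ → ℝ) (Ψ' : ℝ → Fin d → ℝ)
    (hΨ'c : ContinuousOn Ψ' (Ici 0))
    (θ : ℝ → ℝ) (hθ : ContinuousOn θ (Ici 0))
    (H : (ℝ → ℝ) → (Fin d → ℝ) → ℝ → ℝ)
    (hH : ∀ (ϑ : ℝ → ℝ) (z : Fin d → ℝ) (τ : ℝ),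
      H ϑ z τ = ℓ - (∫ s in (0 : ℝ)..τ, ϑ s * (Ψ' (τ - s) ⬝ᵥ e₁)) - Φ' τ - Ψ' τ ⬝ᵥ z) :
    ∀ τ ∈ Ici (0 : ℝ),
      H (fun s => θ (δ + s)) x' τ
        = H θ x (δ + τ) + Φ' (δ + τ) - Φ' τ + Ψ' (δ + τ) ⬝ᵥ x - Ψ' τ ⬝ᵥ x'
          + ∫ s in (0 : ℝ)..δ, θ s * (Ψ' (δ + τ - s) ⬝ᵥ e₁) := by
  intro τ hτ
  have hδτ : δ ≤ δ + τ := le_add_of_nonneg_right hτ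
  have hcont := continuousOn_mul_dotProduct_comp_sub hθ hΨ'c e₁ (δ + τ)
  have hshift := intervalIntegral.integral_comp_add_left_eq_sub
    (hcont.mono (uIcc_of_le (hδ.trans hδτ)).subset).intervalIntegrable
    (hcont.mono ((uIcc_of_le hδ).trans_subset (Icc_subset_Icc_right hδτ))).intervalIntegrable
  simp only [add_sub_add_left_eq_sub] at hshift
  rw [hH, hH, hshift]
  ring

/-- Efficient updating of forward rate curves in CRC models.
For the forward-curve operator H(θ, x)(τ) = ℓ − ∫₀^τ θ(s)⟨Ψ'(τ−s), e₁⟩ ds − Φ'(τ) − ⟨Ψ'(τ), x⟩,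
one has, for every τ ≥ 0,
H(θ(δ+·), x')(τ) = H(θ, x)(δ+τ) + Φ'(δ+τ) − Φ'(τ) + ⟨Ψ'(δ+τ), x⟩ − ⟨Ψ'(τ), x'⟩
                   + ∫₀^δ θ(s)⟨Ψ'(δ+τ−s), e₁⟩ ds. -/
theorem stmt_8 (d : ℕ) (hd : 1 ≤ d) (ℓ : ℝ)
    (e₁ : Fin d → ℝ) (he₁ : e₁ = fun j : Fin d => if (j : ℕ) = 0 then (1 : ℝ) else 0)
    (x x' : Fin d → ℝ) (δ : ℝ) (hδ : 0 ≤ δ)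
    (Φ Φ' : ℝ → ℝ) (Ψ Ψ' : ℝ → Fin d → ℝ)
    (hΦ' : ∀ τ ∈ Ici (0 : ℝ), HasDerivWithinAt Φ (Φ' τ) (Ici 0) τ)
    (hΦ'c : ContinuousOn Φ' (Ici 0))
    (hΨ' : ∀ τ ∈ Ici (0 : ℝ), HasDerivWithinAt Ψ (Ψ' τ) (Ici 0) τ)
    (hΨ'c : ContinuousOn Ψ' (Ici 0))
    (θ : ℝ → ℝ) (hθ : ContinuousOn θ (Ici 0))
    (H : (ℝ → ℝ) → (Fin d → ℝ) → ℝ → ℝ)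
    (hH : ∀ (ϑ : ℝ → ℝ) (z : Fin d → ℝ) (τ : ℝ),
      H ϑ z τ = ℓ - (∫ s in (0 : ℝ)..τ, ϑ s * (Ψ' (τ - s) ⬝ᵥ e₁)) - Φ' τ - Ψ' τ ⬝ᵥ z) :
    ∀ τ ∈ Ici (0 : ℝ),
      H (fun s => θ (δ + s)) x' τ
        = H θ x (δ + τ) + Φ' (δ + τ) - Φ' τ + Ψ' (δ + τ) ⬝ᵥ x - Ψ' τ ⬝ᵥ x'
          + ∫ s in (0 : ℝ)..δ, θ s * (Ψ' (δ + τ - s) ⬝ᵥ e₁) :=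
  stmt_8_general d ℓ e₁ x x' δ hδ Φ' Ψ' hΨ'c θ hθ H hH
end

section
/- Let β < 0, t ≥ 0, let g : ℝ₊ → ℝ be continuous, Y : [0,t] → ℝ continuous, and I ∈ ℝ. Define for each τ ≥ 0: u(τ) = g(t+τ) − ∫₀^t (Y(s)/β)·e^{β(τ+t−s)}·(1 − e^{β(τ+t−s)}) ds + e^{βτ}·I, and set r = u(0) and ξ = ∫₀^t Y(s)·e^{2β(t−s)} ds. Then for every τ ≥ 0, u(τ) = g(t+τ) + e^{βτ}·(r − g(t)) + (1/β)·(e^{2βτ} − e^{βτ})·ξ. (Pathwise, this shows that in the Vasiček CRC example the forward rate curve h(t,τ) is determined by the initial curve h(0,·), the short rate r(t) = h(t,0), and ξ(t) = ∫₀^t Y(s)e^{2β(t−s)} ds, giving a three-dimensional realisation.) -/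
/-!
The kernel factors as `exp (β (τ + t - s)) = exp (β τ) exp (β (t - s))`, so
`u τ = g (t + τ) - exp (β τ) A + exp (2 β τ) B + exp (β τ) I` for two numbers `A`, `B` that
do not depend on `τ`. Evaluating at `τ = 0` expresses `I - A` through `r`, and `B = ξ / β`.
-/

open Set Real intervalIntegral

theorem integral_mul_exp_mul_one_sub_exp {f : ℝ → ℝ} {a b : ℝ}
    (hf : IntervalIntegrable f MeasureTheory.volume a b) (β c τ : ℝ) :
    ∫ s in a..b, f s * exp (β * (τ + c - s)) * (1 - exp (β * (τ + c - s))) =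
      exp (β * τ) * (∫ s in a..b, f s * exp (β * (c - s)))
        - exp (2 * β * τ) * ∫ s in a..b, f s * exp (2 * β * (c - s)) := by
  have hexp (k : ℝ) :
      IntervalIntegrable (fun s => f s * exp (k * (c - s))) MeasureTheory.volume a b :=
    hf.mul_continuousOn (by fun_prop)
  rw [← integral_const_mul, ← integral_const_mul,
    ← integral_sub ((hexp β).const_mul _) ((hexp (2 * β)).const_mul _)]
  refine integral_congr fun s _ => ?_
  have hsplit : exp (β * (τ + c - s)) = exp (β * τ) * exp (β * (c - s)) := by
    rw [← exp_add]; ring_nf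
  have hsq : exp (2 * β * τ) * exp (2 * β * (c - s)) = exp (β * (τ + c - s)) ^ 2 := by
    rw [← exp_add, ← exp_nat_mul]; ring_nf
  linear_combination f s * hsplit + f s * hsq

theorem stmt_13_general (β t : ℝ) (ht : 0 ≤ t)
    (g : ℝ → ℝ)
    (Y : ℝ → ℝ) (hY : ContinuousOn Y (Icc 0 t))
    (I : ℝ) (u : ℝ → ℝ)
    (hu : ∀ τ, u τ = g (t + τ)
      - (∫ s in (0 : ℝ)..t,
          (Y s / β) * Real.exp (β * (τ + t - s)) * (1 - Real.exp (β * (τ + t - s))))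
      + Real.exp (β * τ) * I)
    (r ξ : ℝ) (hr : r = u 0)
    (hξ : ξ = ∫ s in (0 : ℝ)..t, Y s * Real.exp (2 * β * (t - s))) :
    ∀ τ, 0 ≤ τ →
      u τ = g (t + τ) + Real.exp (β * τ) * (r - g t)
        + (1 / β) * (Real.exp (2 * β * τ) - Real.exp (β * τ)) * ξ := by
  intro τ _
  set A := ∫ s in (0 : ℝ)..t, Y s / β * exp (β * (t - s))
  set B := ∫ s in (0 : ℝ)..t, Y s / β * exp (2 * β * (t - s))
  have hYβ : IntervalIntegrable (fun s => Y s / β) MeasureTheory.volume 0 t :=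
    (hY.div_const β).intervalIntegrable_of_Icc ht
  have hu' (τ : ℝ) :
      u τ = g (t + τ) - (exp (β * τ) * A - exp (2 * β * τ) * B) + exp (β * τ) * I := by
    rw [hu, integral_mul_exp_mul_one_sub_exp hYβ]
  have hB : B = 1 / β * ξ := by
    rw [hξ, ← integral_const_mul]
    exact integral_congr fun s _ => by ring
  rw [hr, hu' τ, hu' 0, hB]
  simp only [mul_zero, add_zero, exp_zero]
  ring

/-- Finite-dimensional realisation of the Vasiček CRC example.
For β < 0, continuous g, Y and I ∈ ℝ, the curve
u(τ) = g(t+τ) − ∫₀^t (Y(s)/β)e^{β(τ+t−s)}(1 − e^{β(τ+t−s)}) ds + e^{βτ}I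
satisfies u(τ) = g(t+τ) + e^{βτ}(r − g(t)) + (1/β)(e^{2βτ} − e^{βτ})ξ with r = u(0)
and ξ = ∫₀^t Y(s)e^{2β(t−s)} ds. -/
theorem stmt_13 (β t : ℝ) (hβ : β < 0) (ht : 0 ≤ t)
    (g : ℝ → ℝ) (hg : ContinuousOn g (Ici 0))
    (Y : ℝ → ℝ) (hY : ContinuousOn Y (Icc 0 t))
    (I : ℝ) (u : ℝ → ℝ)
    (hu : ∀ τ, u τ = g (t + τ)
      - (∫ s in (0 : ℝ)..t,
          (Y s / β) * Real.exp (β * (τ + t - s)) * (1 - Real.exp (β * (τ + t - s))))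
      + Real.exp (β * τ) * I)
    (r ξ : ℝ) (hr : r = u 0)
    (hξ : ξ = ∫ s in (0 : ℝ)..t, Y s * Real.exp (2 * β * (t - s))) :
    ∀ τ, 0 ≤ τ →
      u τ = g (t + τ) + Real.exp (β * τ) * (r - g t)
        + (1 / β) * (Real.exp (2 * β * τ) - Real.exp (β * τ)) * ξ :=
  stmt_13_general β t ht g Y hY I u hu r ξ hr hξ
end
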